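/- arXiv:2512.22284 — 2 statements merged into one kernel-verified Lean document; each statement's English description precedes it below -/
import Mathlib

section
/- For every fixed natural number k, the normalized Fibonacci weight of the (M−k)-th learner converges to the (k+2)-nd inverse power of the golden ratio: Tendsto (fun M => (F (M − k) : ℝ) / (∑_{j=1}^{M} F j)) atTop (𝓝 (φ^(−(k+2)))), where the limit is taken as M → ∞. (This is the precise form of the paper's Golden Asymptotic Equidistribution lemma.) -/
open Filter Finset Real

noncomputable def phi : ℝ := (1 + Real.sqrt 5) / 2

open goldenRatio in
private lemma sum_fib_Icc (M : ℕ) :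
    (∑ j ∈ Finset.Icc 1 M, (Nat.fib j : ℝ)) = (Nat.fib (M + 2) : ℝ) - 1 := by
  induction M with
  | zero => simp
  | succ n ih =>
      rw [Finset.sum_Icc_succ_top (by omega), ih]
      have := Nat.fib_add_two (n := n + 1)
      push_cast [this]
      ring

open goldenRatio in
private lemma abs_ratio_lt_one : |ψ * φ⁻¹| < 1 := by
  have h1 : |ψ| < 1 := abs_lt.mpr ⟨neg_one_lt_goldenConj, by linarith [goldenConj_neg]⟩
  have h2 : |φ⁻¹| < 1 := by
    rw [abs_of_pos (inv_pos.mpr goldenRatio_pos)]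
    exact inv_lt_one_of_one_lt₀ one_lt_goldenRatio
  calc |ψ * φ⁻¹| = |ψ| * |φ⁻¹| := abs_mul _ _
    _ < 1 * 1 := mul_lt_mul'' h1 h2 (abs_nonneg _) (abs_nonneg _)
    _ = 1 := one_mul 1

open goldenRatio in
private lemma fib_div_tendsto (c : ℕ) :
    Tendsto (fun M : ℕ => (Nat.fib M : ℝ) / ((Nat.fib (M + c) : ℝ) - 1))
      atTop (nhds ((φ ^ c)⁻¹)) := by
  have hs5 : (0:ℝ) < √5 := Real.sqrt_pos.mpr (by norm_num)
  have hr : Tendsto (fun M : ℕ => (ψ * φ⁻¹) ^ M) atTop (nhds 0) :=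
    tendsto_pow_atTop_nhds_zero_of_abs_lt_one abs_ratio_lt_one
  have hinv : Tendsto (fun M : ℕ => (φ⁻¹) ^ M) atTop (nhds 0) := by
    apply tendsto_pow_atTop_nhds_zero_of_abs_lt_one
    rw [abs_of_pos (inv_pos.mpr goldenRatio_pos)]
    exact inv_lt_one_of_one_lt₀ one_lt_goldenRatio
  have hN : ∀ M : ℕ, (Nat.fib M : ℝ) * (φ⁻¹) ^ M = (1 - (ψ * φ⁻¹) ^ M) / √5 := by
    intro M
    rw [Real.coe_fib_eq, div_mul_eq_mul_div, sub_mul, ← mul_pow, ← mul_pow,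
      mul_inv_cancel₀ goldenRatio_ne_zero, one_pow]
  have hD : ∀ M : ℕ, ((Nat.fib (M + c) : ℝ) - 1) * (φ⁻¹) ^ M
      = (φ ^ c - ψ ^ c * (ψ * φ⁻¹) ^ M) / √5 - (φ⁻¹) ^ M := by
    intro M
    have hpow : (φ:ℝ) ^ M ≠ 0 := pow_ne_zero _ goldenRatio_ne_zero
    rw [Real.coe_fib_eq, mul_pow, inv_pow, pow_add, pow_add]
    field_simp
  have hNlim : Tendsto (fun M : ℕ => (Nat.fib M : ℝ) * (φ⁻¹) ^ M) atTop (nhds ((√5)⁻¹)) := by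
    simp only [hN]
    have := (tendsto_const_nhds (f := atTop (α := ℕ)) (x := (1:ℝ))).sub hr
    simpa [one_div] using this.div_const (√5)
  have hDlim : Tendsto (fun M : ℕ => ((Nat.fib (M + c) : ℝ) - 1) * (φ⁻¹) ^ M)
      atTop (nhds (φ ^ c / √5)) := by
    simp only [hD]
    have h1 : Tendsto (fun M : ℕ => (φ ^ c - ψ ^ c * (ψ * φ⁻¹) ^ M) / √5)
        atTop (nhds (φ ^ c / √5)) := by
      have := (tendsto_const_nhds (f := atTop (α := ℕ)) (x := (φ:ℝ) ^ c)).sub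
        (hr.const_mul (ψ ^ c))
      simpa using this.div_const (√5)
    simpa using h1.sub hinv
  have hDne : φ ^ c / √5 ≠ 0 := by
    apply div_ne_zero (pow_ne_zero _ goldenRatio_ne_zero) (ne_of_gt hs5)
  have := hNlim.div hDlim hDne
  have heq : ∀ M : ℕ, (Nat.fib M : ℝ) * (φ⁻¹) ^ M / (((Nat.fib (M + c) : ℝ) - 1) * (φ⁻¹) ^ M)
      = (Nat.fib M : ℝ) / ((Nat.fib (M + c) : ℝ) - 1) := by
    intro M
    exact mul_div_mul_right _ _ (pow_ne_zero _ (inv_ne_zero goldenRatio_ne_zero))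
  have hval : (√5)⁻¹ / (φ ^ c / √5) = (φ ^ c)⁻¹ := by
    field_simp
  rw [← hval]
  exact this.congr heq

/-- Golden Asymptotic Equidistribution: for fixed `k`, the normalized Fibonacci
weight of the `(M - k)`-th learner converges to `φ ^ (-(k+2))` as `M → ∞`. -/
theorem fib_weight_tendsto_golden (k : ℕ) :
    Tendsto (fun M : ℕ =>
        (Nat.fib (M - k) : ℝ) / ∑ j ∈ Finset.Icc 1 M, (Nat.fib j : ℝ))
      atTop (nhds (phi ^ (-((k : ℤ) + 2)))) := by
  have hphi : phi = goldenRatio := rfl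
  have hval : phi ^ (-((k : ℤ) + 2)) = (goldenRatio ^ (k + 2))⁻¹ := by
    rw [hphi, show -((k:ℤ) + 2) = -((k + 2 : ℕ) : ℤ) by push_cast; ring,
      zpow_neg, zpow_natCast]
  rw [hval, ← tendsto_add_atTop_iff_nat k]
  have : ∀ M : ℕ, (Nat.fib (M + k - k) : ℝ) / ∑ j ∈ Finset.Icc 1 (M + k), (Nat.fib j : ℝ)
      = (Nat.fib M : ℝ) / ((Nat.fib (M + (k + 2)) : ℝ) - 1) := by
    intro M
    rw [Nat.add_sub_cancel, sum_fib_Icc]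
    ring_nf
  exact (fib_div_tendsto (k + 2)).congr (fun M => (this M).symm)
end

section
/- The squared ℓ²-norm of the normalized Fibonacci weight vector converges to φ^(−3) = 2φ − 3 as the number of learners grows: Tendsto (fun M => (∑_{m=1}^{M} (F m : ℝ)^2) / (∑_{m=1}^{M} (F m : ℝ))^2) atTop (𝓝 (φ^(−3))). (This makes precise the key quantity ∑_{m=1}^{M} α_m² governing the variance of orthogonalized Fibonacci ensembles.) -/
open Filter Finset Real

lemma phi_eq_gold : phi = goldenRatio := rfl

/-- Sum of first `n` Fibonacci numbers. -/
lemma sum_fib_eq (n : ℕ) : ∑ m ∈ Finset.Icc 1 n, Nat.fib m + 1 = Nat.fib (n + 2) := by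
  induction n with
  | zero => simp
  | succ k ih =>
    rw [Finset.sum_Icc_succ_top (by omega)]
    have : Nat.fib (k + 1 + 2) = Nat.fib (k + 2) + Nat.fib (k + 1) := by
      rw [Nat.fib_add_two]; ring
    omega

/-- Sum of squares of Fibonacci numbers. -/
lemma sum_fib_sq_eq (n : ℕ) :
    ∑ m ∈ Finset.Icc 1 n, Nat.fib m ^ 2 = Nat.fib n * Nat.fib (n + 1) := by
  induction n with
  | zero => simp
  | succ k ih =>
    rw [Finset.sum_Icc_succ_top (by omega), ih, Nat.fib_add_two]
    ring

lemma goldConj_div_gold_abs_lt_one : |goldenConj / goldenRatio| < 1 := by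
  rw [abs_div, abs_of_pos goldenRatio_pos, div_lt_one goldenRatio_pos, abs_of_neg goldenConj_neg]
  have h := Real.sq_sqrt (by norm_num : (5:ℝ) ≥ 0)
  have h1 : (1:ℝ) ≤ Real.sqrt 5 := by nlinarith [Real.sqrt_nonneg 5]
  simp only [goldenConj, goldenRatio]
  linarith

lemma fib_div_phi_tendsto :
    Tendsto (fun n : ℕ => (Nat.fib n : ℝ) / phi ^ n) atTop (nhds (1 / Real.sqrt 5)) := by
  have hratio : Tendsto (fun n : ℕ => (goldenConj / goldenRatio) ^ n) atTop (nhds 0) :=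
    tendsto_pow_atTop_nhds_zero_of_abs_lt_one goldConj_div_gold_abs_lt_one
  have h5 : Real.sqrt 5 ≠ 0 := by positivity
  have key : Tendsto (fun n : ℕ => (1 - (goldenConj / goldenRatio) ^ n) / Real.sqrt 5)
      atTop (nhds ((1 - 0) / Real.sqrt 5)) :=
    ((tendsto_const_nhds.sub hratio).div_const _)
  rw [sub_zero] at key
  refine key.congr fun n => ?_
  rw [Real.coe_fib_eq, phi_eq_gold, div_pow]
  have hg : goldenRatio ^ n ≠ 0 := pow_ne_zero _ goldenRatio_ne_zero
  field_simp

/-- The squared ℓ²-norm of the normalized Fibonacci weight vector converges to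
`φ ^ (-3)` as the number of learners grows. -/
theorem fib_weight_sq_norm_tendsto :
    Tendsto (fun M : ℕ =>
        (∑ m ∈ Finset.Icc 1 M, (Nat.fib m : ℝ) ^ 2) /
          (∑ m ∈ Finset.Icc 1 M, (Nat.fib m : ℝ)) ^ 2)
      atTop (nhds (phi ^ (-3 : ℤ))) := by
  set a : ℕ → ℝ := fun n => (Nat.fib n : ℝ) / phi ^ n with ha_def
  set c : ℝ := 1 / Real.sqrt 5 with hc_def
  have hc : c ≠ 0 := by rw [hc_def]; positivity
  have hphi : (0:ℝ) < phi := goldenRatio_pos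
  have ha : Tendsto a atTop (nhds c) := fib_div_phi_tendsto
  have ha1 : Tendsto (fun M => a (M + 1)) atTop (nhds c) :=
    ha.comp (tendsto_add_atTop_nat 1)
  have ha2 : Tendsto (fun M => a (M + 2)) atTop (nhds c) :=
    ha.comp (tendsto_add_atTop_nat 2)
  have hinv : Tendsto (fun M : ℕ => (phi ^ (M + 2))⁻¹) atTop (nhds 0) := by
    have : Tendsto (fun M : ℕ => (phi⁻¹) ^ M) atTop (nhds 0) := by
      apply tendsto_pow_atTop_nhds_zero_of_abs_lt_one
      rw [abs_of_pos (by positivity), inv_lt_one_iff₀]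
      right; exact one_lt_goldenRatio
    have := (this.comp (tendsto_add_atTop_nat 2))
    refine this.congr fun M => ?_
    simp [inv_pow]
  have hden : Tendsto (fun M => a (M + 2) - (phi ^ (M + 2))⁻¹) atTop (nhds c) := by
    have := ha2.sub hinv
    rwa [sub_zero] at this
  have hlim : Tendsto (fun M =>
      phi ^ (-3 : ℤ) * ((a M * a (M + 1)) / (a (M + 2) - (phi ^ (M + 2))⁻¹) ^ 2))
      atTop (nhds (phi ^ (-3 : ℤ))) := by
    have h := ((ha.mul ha1).div (hden.pow 2) (by positivity)).const_mul (phi ^ (-3 : ℤ))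
    have : phi ^ (-3 : ℤ) * (c * c / c ^ 2) = phi ^ (-3 : ℤ) := by
      rw [← sq, div_self (by positivity)]; ring
    rwa [this] at h
  refine hlim.congr' ?_
  filter_upwards [eventually_ge_atTop 1] with M hM
  have hsum1 : (∑ m ∈ Finset.Icc 1 M, (Nat.fib m : ℝ)) = (Nat.fib (M + 2) : ℝ) - 1 := by
    have := sum_fib_eq M
    push_cast [← this]
    ring
  have hsum2 : (∑ m ∈ Finset.Icc 1 M, (Nat.fib m : ℝ) ^ 2)
      = (Nat.fib M : ℝ) * Nat.fib (M + 1) := by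
    rw [← Nat.cast_mul, ← sum_fib_sq_eq M]
    push_cast
    rfl
  have hD : (1:ℝ) < (Nat.fib (M + 2) : ℝ) := by
    have : 2 ≤ Nat.fib (M + 2) := by
      calc 2 = Nat.fib 3 := rfl
      _ ≤ Nat.fib (M + 2) := Nat.fib_mono (by omega)
    exact_mod_cast by omega
  have hDne : (Nat.fib (M + 2) : ℝ) - 1 ≠ 0 := by linarith
  rw [hsum1, hsum2, ha_def]
  simp only
  rw [zpow_neg, zpow_ofNat]
  have h1 : phi ^ M ≠ 0 := by positivity
  have h2 : phi ^ (M + 1) ≠ 0 := by positivity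
  have h3 : phi ^ (M + 2) ≠ 0 := by positivity
  have hfrac : (Nat.fib (M + 2) : ℝ) / phi ^ (M + 2) - (phi ^ (M + 2))⁻¹
      = ((Nat.fib (M + 2) : ℝ) - 1) / phi ^ (M + 2) := by
    field_simp
  rw [hfrac]
  rw [div_pow, div_mul_div_comm, div_div_div_eq]
  rw [pow_succ, pow_succ, pow_succ] at *
  field_simp
  ring
end
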